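/- arXiv:2308.13556 — 7 statements merged into one kernel-verified Lean document; each statement's English description precedes it below -/
import Mathlib

section
/- Let m ∈ ℕ and let f_0, f_1, …, f_m : ℕ → ℝ be infinite real vectors such that for every nonzero tuple (C_0, …, C_m) ∈ ℝ^{m+1} the series ∑_{k∈ℕ} |∑_{r=0}^m C_r f_r(k)|² diverges to infinity (i.e. no nontrivial linear combination of f_0,…,f_m lies in ℓ²(ℕ)). Then for every s with 0 ≤ s ≤ m, the ratio Γ(f_0^{(n)}, …, f_m^{(n)}) / Γ(f_0^{(n)}, …, \widehat{f_s^{(n)}}, …, f_m^{(n)}) tends to +∞ as n → ∞, where the hat means the vector f_s^{(n)} is omitted. -/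
/-!
Write `G n` for the Gram matrix of the truncations. Its quadratic form
`C ↦ ∑_{k<n} (∑ r, C r f r k)²` is monotone in `n` and tends to `∞` at every `C ≠ 0`, so by
compactness of the unit sphere (a Dini-type argument) `M ‖C‖² ≤ Cᵀ G n C` holds for all `C` once
`n` is large. By Cramer's rule the ratio of
Gram determinants is `1 / (G n)⁻¹ s s`, and testing the quadratic form on `x = (G n)⁻¹ e_s`, for
which `xᵀ G n x = x s = (G n)⁻¹ s s`, gives `M (x s)² ≤ x s`, i.e. `(G n)⁻¹ s s ≤ 1 / M`.
-/

open Matrix Filter Finset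

theorem IsCompact.eventually_forall_le_of_tendsto_atTop {X : Type*} [TopologicalSpace X]
    {K : Set X} (hK : IsCompact K) {q : ℕ → X → ℝ} (hcont : ∀ n, Continuous (q n))
    (hmono : ∀ x, Monotone fun n => q n x)
    (htend : ∀ x ∈ K, Tendsto (fun n => q n x) atTop atTop) (M : ℝ) :
    ∀ᶠ n in atTop, ∀ x ∈ K, M ≤ q n x := by
  obtain ⟨N, hN⟩ := hK.elim_directed_cover (fun n => {x | M < q n x})
    (fun n => isOpen_lt continuous_const (hcont n))
    (fun x hx => Set.mem_iUnion.2 ((htend x hx).eventually_gt_atTop M).exists)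
    (Monotone.directed_le fun a b hab x hx => hx.trans_le (hmono x hab))
  filter_upwards [eventually_ge_atTop N] with n hn x hx
  exact (hN hx).le.trans (hmono x hn)

theorem Matrix.mul_norm_sq_le_dotProduct_mulVec {ι : Type*} [Fintype ι] {A : Matrix ι ι ℝ}
    {M : ℝ} (hA : ∀ u ∈ Metric.sphere (0 : ι → ℝ) 1, M ≤ u ⬝ᵥ A *ᵥ u) (x : ι → ℝ) :
    M * ‖x‖ ^ 2 ≤ x ⬝ᵥ A *ᵥ x := by
  rcases eq_or_ne x 0 with rfl | hx
  · simp
  have hx' : ‖x‖ ≠ 0 := norm_ne_zero_iff.2 hx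
  have hu := hA (‖x‖⁻¹ • x) (by simp [norm_smul, hx'])
  rw [mulVec_smul, smul_dotProduct, dotProduct_smul, smul_smul, smul_eq_mul,
    ← pow_two, inv_pow, inv_mul_eq_div, le_div_iff₀ (by positivity)] at hu
  exact hu

theorem Matrix.det_submatrix_succAbove_self {R : Type*} [CommRing R] {m : ℕ}
    (A : Matrix (Fin (m + 1)) (Fin (m + 1)) R) (hA : IsUnit A.det) (s : Fin (m + 1)) :
    (A.submatrix s.succAbove s.succAbove).det = A.det * A⁻¹ s s := by
  rw [nonsing_inv_apply _ hA, smul_apply, adjugate_fin_succ_eq_det_submatrix, ← two_mul,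
    pow_mul, neg_one_sq, one_pow, one_mul, smul_eq_mul, ← mul_assoc, hA.mul_val_inv, one_mul]

theorem Matrix.le_det_div_det_submatrix_succAbove {m : ℕ}
    {A : Matrix (Fin (m + 1)) (Fin (m + 1)) ℝ} {M : ℝ} (hM : 0 < M)
    (hA : ∀ x, M * ‖x‖ ^ 2 ≤ x ⬝ᵥ A *ᵥ x) (s : Fin (m + 1)) :
    M ≤ A.det / (A.submatrix s.succAbove s.succAbove).det := by
  have hdet : IsUnit A.det := by
    refine isUnit_iff_ne_zero.2 fun h => ?_
    obtain ⟨v, hv, hAv⟩ := exists_mulVec_eq_zero_iff.2 h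
    have := hA v
    rw [hAv, dotProduct_zero] at this
    exact (mul_pos hM (by positivity)).not_ge this
  set x := A⁻¹ *ᵥ Pi.single s 1
  have hAx : A *ᵥ x = Pi.single s 1 := by
    rw [mulVec_mulVec, mul_nonsing_inv _ hdet, one_mulVec]
  have hxs : x s = A⁻¹ s s := by simp [x, mulVec_single]
  have hx : x ≠ 0 := fun h => by simpa [h] using congrFun hAx s
  have hquad : M * ‖x‖ ^ 2 ≤ x s := by simpa [hAx] using hA x
  have hxs_le : x s ≤ ‖x‖ := (le_abs_self _).trans (norm_le_pi_norm x s)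
  have hxs_pos : 0 < x s := (mul_pos hM (by positivity)).trans_le hquad
  rw [det_submatrix_succAbove_self A hdet, ← hxs, div_mul_cancel_left₀ hdet.ne_zero, ← one_div,
    le_div_iff₀ hxs_pos]
  refine le_of_mul_le_mul_right ?_ hxs_pos
  calc M * x s * x s = M * x s ^ 2 := by ring
    _ ≤ M * ‖x‖ ^ 2 := by gcongr
    _ ≤ 1 * x s := by rwa [one_mul]

def truncGram {ι : Type*} (f : ι → ℕ → ℝ) (n : ℕ) : Matrix ι ι ℝ :=
  of fun i j => ∑ k ∈ range n, f i k * f j k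

section truncGram

variable {ι : Type*} [Fintype ι]

theorem dotProduct_truncGram_mulVec (f : ι → ℕ → ℝ) (n : ℕ) (C : ι → ℝ) :
    C ⬝ᵥ truncGram f n *ᵥ C = ∑ k ∈ range n, (∑ r, C r * f r k) ^ 2 := by
  simp only [truncGram, dotProduct, mulVec, of_apply, sq, Finset.mul_sum, Finset.sum_mul]
  rw [Finset.sum_comm (s := range n)]
  refine Finset.sum_congr rfl fun i _ => ?_
  rw [Finset.sum_comm]
  exact Finset.sum_congr rfl fun j _ => Finset.sum_congr rfl fun k _ => by ring

theorem eventually_mul_norm_sq_le_dotProduct_truncGram_mulVec {f : ι → ℕ → ℝ}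
    (hf : ∀ C : ι → ℝ, C ≠ 0 →
      Tendsto (fun n => ∑ k ∈ range n, (∑ r, C r * f r k) ^ 2) atTop atTop) (M : ℝ) :
    ∀ᶠ n in atTop, ∀ x, M * ‖x‖ ^ 2 ≤ x ⬝ᵥ truncGram f n *ᵥ x := by
  have hsphere := (isCompact_sphere (0 : ι → ℝ) 1).eventually_forall_le_of_tendsto_atTop
    (q := fun n C => ∑ k ∈ range n, (∑ r, C r * f r k) ^ 2) (fun n => by fun_prop)
    (fun C _ _ hab => sum_le_sum_of_subset_of_nonneg (range_subset_range.2 hab)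
      fun _ _ _ => sq_nonneg _)
    (fun C hC => hf C (Metric.ne_of_mem_sphere hC one_ne_zero)) M
  filter_upwards [hsphere] with n hn
  exact mul_norm_sq_le_dotProduct_mulVec fun u hu => (dotProduct_truncGram_mulVec f n u) ▸ hn u hu

end truncGram

/-- If no nontrivial linear combination of the vectors `f 0, …, f m : ℕ → ℝ` lies in `ℓ²(ℕ)`,
then for every `s` the ratio of the Gram determinant of the truncations of all `m + 1` vectors
to the Gram determinant of the truncations with `f s` omitted tends to `+∞`. -/
theorem gram_ratio_tendsto_atTop (m : ℕ) (f : Fin (m + 1) → ℕ → ℝ)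
    (hf : ∀ C : Fin (m + 1) → ℝ, C ≠ 0 →
      Tendsto (fun n => ∑ k ∈ Finset.range n, (∑ r, C r * f r k) ^ 2) atTop atTop) :
    ∀ s : Fin (m + 1),
      Tendsto (fun n =>
          (Matrix.det (Matrix.of fun i j : Fin (m + 1) =>
              ∑ k ∈ Finset.range n, f i k * f j k)) /
          (Matrix.det (Matrix.of fun i j : Fin m =>
              ∑ k ∈ Finset.range n, f (s.succAbove i) k * f (s.succAbove j) k)))
        atTop atTop := by
  intro s
  refine tendsto_atTop.2 fun M => ?_
  filter_upwards [eventually_mul_norm_sq_le_dotProduct_truncGram_mulVec hf (max M 1)] with n hn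
  exact (le_max_left M 1).trans (le_det_div_det_submatrix_succAbove (by positivity) hn s)
end

section
/- Let m ∈ ℕ and let f_0, f_1, …, f_m : ℕ → ℝ be infinite real vectors such that for every nonzero tuple (C_0, …, C_m) ∈ ℝ^{m+1} the series ∑_{k∈ℕ} |∑_{r=0}^m C_r f_r(k)|² diverges to infinity. Then for every s with 0 ≤ s ≤ m, the ratio det(I_{m+1} + γ(f_0^{(n)}, …, f_m^{(n)})) / det(I_m + γ(f_0^{(n)}, …, \widehat{f_s^{(n)}}, …, f_m^{(n)})) tends to +∞ as n → ∞, where I_p denotes the p×p identity matrix and the hat means the vector f_s^{(n)} is omitted. -/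
open Matrix Filter Finset

namespace DetGramAux

variable {m n : ℕ}

def sAE (s : Fin (m + 1)) : Fin m ⊕ Unit ≃ Fin (m + 1) :=
  ((finSuccEquiv' s).trans (Equiv.optionEquivSumPUnit _)).symm

@[simp] lemma sAE_inl (s : Fin (m + 1)) (i : Fin m) : sAE s (Sum.inl i) = s.succAbove i := rfl
@[simp] lemma sAE_inr (s : Fin (m + 1)) (u : Unit) : sAE s (Sum.inr u) = s := rfl

lemma dot_identity (B : Matrix (Fin m) (Fin n) ℝ) (a : Fin n → ℝ) (x : Fin m → ℝ)
    (hx : ((1 : Matrix (Fin m) (Fin m) ℝ) + B * Bᵀ) *ᵥ x = B *ᵥ a) :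
    (1 + a ⬝ᵥ a) - (B *ᵥ a) ⬝ᵥ x
      = 1 + x ⬝ᵥ x + (a - Bᵀ *ᵥ x) ⬝ᵥ (a - Bᵀ *ᵥ x) := by
  have h1 : (B * Bᵀ) *ᵥ x = B *ᵥ a - x := by
    rw [← hx, add_mulVec, one_mulVec]; ring_nf
  have hy : (Bᵀ *ᵥ x) ⬝ᵥ (Bᵀ *ᵥ x) = (B *ᵥ a) ⬝ᵥ x - x ⬝ᵥ x := by
    calc (Bᵀ *ᵥ x) ⬝ᵥ (Bᵀ *ᵥ x) = ((Bᵀ *ᵥ x) ᵥ* Bᵀ) ⬝ᵥ x := dotProduct_mulVec _ _ _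
      _ = (B *ᵥ (Bᵀ *ᵥ x)) ⬝ᵥ x := by rw [vecMul_transpose]
      _ = ((B * Bᵀ) *ᵥ x) ⬝ᵥ x := by rw [mulVec_mulVec]
      _ = (B *ᵥ a - x) ⬝ᵥ x := by rw [h1]
      _ = (B *ᵥ a) ⬝ᵥ x - x ⬝ᵥ x := sub_dotProduct _ _ _
  have ha : a ⬝ᵥ (Bᵀ *ᵥ x) = (B *ᵥ a) ⬝ᵥ x := by
    rw [dotProduct_mulVec, vecMul_transpose]
  have hc : (Bᵀ *ᵥ x) ⬝ᵥ a = (B *ᵥ a) ⬝ᵥ x := by rw [dotProduct_comm]; exact ha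
  rw [dotProduct_sub, sub_dotProduct, sub_dotProduct, ha, hc, hy]
  ring

lemma det_block (B : Matrix (Fin m) (Fin n) ℝ) (a : Fin n → ℝ)
    (hA : ((1 : Matrix (Fin m) (Fin m) ℝ) + B * Bᵀ).PosDef) :
    (Matrix.fromBlocks ((1 : Matrix (Fin m) (Fin m) ℝ) + B * Bᵀ)
        (Matrix.of fun i (_ : Unit) => (B *ᵥ a) i)
        (Matrix.of fun (_ : Unit) j => (B *ᵥ a) j)
        (Matrix.of fun (_ : Unit) (_ : Unit) => 1 + a ⬝ᵥ a)).det
      = ((1 : Matrix (Fin m) (Fin m) ℝ) + B * Bᵀ).det *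
        ((1 + a ⬝ᵥ a) - (B *ᵥ a) ⬝ᵥ (((1 : Matrix (Fin m) (Fin m) ℝ) + B * Bᵀ)⁻¹ *ᵥ (B *ᵥ a))) := by
  set A := (1 : Matrix (Fin m) (Fin m) ℝ) + B * Bᵀ with hAdef
  haveI : Invertible A := hA.isUnit.invertible
  rw [Matrix.det_fromBlocks₁₁, Matrix.invOf_eq_nonsing_inv]
  congr 1
  rw [Matrix.det_unique]
  generalize B *ᵥ a = b
  have key : (Matrix.of (fun (_ : Unit) j => b j) * A⁻¹ *
      Matrix.of (fun i (_ : Unit) => b i)) () ()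
      = b ⬝ᵥ (A⁻¹ *ᵥ b) := by
    simp only [Matrix.mul_apply, Matrix.of_apply, Matrix.mulVec, dotProduct,
      Finset.sum_mul, Finset.mul_sum]
    rw [Finset.sum_comm]
    exact Finset.sum_congr rfl fun j _ => Finset.sum_congr rfl fun i _ => by ring
  simp only [Matrix.sub_apply, Matrix.of_apply]
  rw [key]

lemma posdef_one_add (B : Matrix (Fin m) (Fin n) ℝ) :
    ((1 : Matrix (Fin m) (Fin m) ℝ) + B * Bᵀ).PosDef := by
  refine Matrix.PosDef.add_posSemidef Matrix.PosDef.one ?_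
  simpa [Matrix.conjTranspose_eq_transpose_of_trivial] using
    Matrix.posSemidef_self_mul_conjTranspose B

lemma tendsto_combination (f : Fin (m + 1) → ℕ → ℝ)
    (hf : ∀ C : Fin (m + 1) → ℝ, C ≠ 0 →
      Tendsto (fun n => ∑ k ∈ Finset.range n, (∑ r, C r * f r k) ^ 2) atTop atTop)
    (s : Fin (m + 1)) (c : Fin m → ℝ) :
    Tendsto (fun n => ∑ k ∈ Finset.range n,
      (f s k - ∑ r, c r * f (s.succAbove r) k) ^ 2) atTop atTop := by
  set C : Fin (m + 1) → ℝ :=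
    fun j => Sum.elim (fun r => -(c r)) (fun _ => (1 : ℝ)) ((sAE s).symm j) with hC
  have h : (sAE s).symm s = Sum.inr () := by
    rw [Equiv.symm_apply_eq]; simp
  have h2 : ∀ r : Fin m, (sAE s).symm (s.succAbove r) = Sum.inl r := by
    intro r; rw [Equiv.symm_apply_eq]; simp
  have hCs : C s = 1 := by
    simp only [hC]; beta_reduce; rw [h]; rfl
  have hCne : C ≠ 0 := by
    intro h; rw [h] at hCs; simpa using hCs
  have key : ∀ k, (∑ j, C j * f j k) = f s k - ∑ r, c r * f (s.succAbove r) k := by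
    intro k
    rw [← Equiv.sum_comp (sAE s) (fun j => C j * f j k), Fintype.sum_sum_type]
    simp only [hC]
    beta_reduce
    simp only [Equiv.symm_apply_apply, sAE_inl, sAE_inr, Sum.elim_inl, Sum.elim_inr, one_mul]
    rw [h]
    simp [h2]
    ring
  exact (hf C hCne).congr fun n => Finset.sum_congr rfl fun k _ => by rw [key]


lemma uniform_bound (f : Fin (m + 1) → ℕ → ℝ)
    (hf : ∀ C : Fin (m + 1) → ℝ, C ≠ 0 →
      Tendsto (fun n => ∑ k ∈ Finset.range n, (∑ r, C r * f r k) ^ 2) atTop atTop)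
    (s : Fin (m + 1)) (M : ℝ) :
    ∃ N, ∀ n ≥ N, ∀ c : Fin m → ℝ,
      M ≤ 1 + (∑ r, c r ^ 2) +
        ∑ k ∈ Finset.range n, (f s k - ∑ r, c r * f (s.succAbove r) k) ^ 2 := by
  set g : ℕ → (Fin m → ℝ) → ℝ :=
    fun N c => ∑ k ∈ Finset.range N, (f s k - ∑ r, c r * f (s.succAbove r) k) ^ 2 with hg
  have hgnn : ∀ N c, 0 ≤ g N c := fun N c => Finset.sum_nonneg fun k _ => sq_nonneg _
  have hsqnn : ∀ c : Fin m → ℝ, 0 ≤ ∑ r, c r ^ 2 := fun c => Finset.sum_nonneg fun r _ => sq_nonneg _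
  by_cases hM : M ≤ 1
  · exact ⟨0, fun n _ c => by have := hgnn n c; have := hsqnn c; linarith⟩
  push_neg at hM
  have hM0 : (0 : ℝ) ≤ M := by linarith
  have hcont : ∀ N, Continuous (g N) := by
    intro N
    apply continuous_finset_sum
    intro k _
    exact ((continuous_const.sub (continuous_finset_sum _ fun r _ =>
      (continuous_apply r).mul continuous_const)).pow 2)
  set K := Metric.closedBall (0 : Fin m → ℝ) (Real.sqrt M) with hK
  have hKc : IsCompact K := isCompact_closedBall _ _
  have hcov : K ⊆ ⋃ N, {c | M < g N c} := by
    intro c _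
    obtain ⟨N, hN⟩ := ((tendsto_combination f hf s c).eventually_gt_atTop M).exists
    exact Set.mem_iUnion.2 ⟨N, hN⟩
  obtain ⟨t, ht⟩ := hKc.elim_finite_subcover (fun N => {c | M < g N c})
    (fun N => isOpen_lt continuous_const (hcont N)) hcov
  refine ⟨t.sup id, fun n hn c => ?_⟩
  by_cases hc : c ∈ K
  · obtain ⟨N, hNt, hNc⟩ := Set.mem_iUnion₂.1 (ht hc)
    have hmono : g N c ≤ g n c := by
      apply Finset.sum_le_sum_of_subset_of_nonneg
      · exact Finset.range_subset_range.2 (le_trans (Finset.le_sup (f := id) hNt) hn)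
      · exact fun k _ _ => sq_nonneg _
    have hM' : M < g N c := hNc
    have := hsqnn c
    linarith
  · have hex : ∃ r, Real.sqrt M < |c r| := by
      by_contra hcon
      push_neg at hcon
      apply hc
      rw [hK, mem_closedBall_zero_iff]
      exact (pi_norm_le_iff_of_nonneg (Real.sqrt_nonneg M)).2 fun r => by
        simpa [Real.norm_eq_abs] using hcon r
    obtain ⟨r, hr⟩ := hex
    have h1 : M < c r ^ 2 := by
      have hs := Real.sq_sqrt hM0
      nlinarith [Real.sqrt_nonneg M, sq_abs (c r)]
    have h2 : c r ^ 2 ≤ ∑ r', c r' ^ 2 :=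
      Finset.single_le_sum (fun i _ => sq_nonneg (c i)) (Finset.mem_univ r)
    have := hgnn n c
    linarith


lemma key_step (f : Fin (m + 1) → ℕ → ℝ) (s : Fin (m + 1)) (n : ℕ) :
    ∃ c : Fin m → ℝ,
      (Matrix.det (1 + Matrix.of fun i j : Fin (m + 1) =>
          ∑ k ∈ Finset.range n, f i k * f j k)) /
      (Matrix.det (1 + Matrix.of fun i j : Fin m =>
          ∑ k ∈ Finset.range n, f (s.succAbove i) k * f (s.succAbove j) k))
      = 1 + (∑ r, c r ^ 2) +
        ∑ k ∈ Finset.range n, (f s k - ∑ r, c r * f (s.succAbove r) k) ^ 2 := by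
  set B : Matrix (Fin m) (Fin n) ℝ := Matrix.of fun i k => f (s.succAbove i) k with hB
  set a : Fin n → ℝ := fun k => f s (k : ℕ) with ha
  set A : Matrix (Fin m) (Fin m) ℝ := 1 + B * Bᵀ with hA
  have hApd : A.PosDef := posdef_one_add B
  set x : Fin m → ℝ := A⁻¹ *ᵥ (B *ᵥ a) with hx
  refine ⟨x, ?_⟩
  have hsm : (1 + Matrix.of fun i j : Fin m =>
      ∑ k ∈ Finset.range n, f (s.succAbove i) k * f (s.succAbove j) k) = A := by
    rw [hA]
    congr 1
    ext i j
    simp only [Matrix.of_apply, Matrix.mul_apply, Matrix.transpose_apply, hB]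
    exact (Fin.sum_univ_eq_sum_range
      (fun k => f (s.succAbove i) k * f (s.succAbove j) k) n).symm
  have hsub : (1 + Matrix.of fun i j : Fin (m + 1) =>
        ∑ k ∈ Finset.range n, f i k * f j k).submatrix (sAE s) (sAE s)
      = Matrix.fromBlocks A (Matrix.of fun i (_ : Unit) => (B *ᵥ a) i)
          (Matrix.of fun (_ : Unit) j => (B *ᵥ a) j)
          (Matrix.of fun (_ : Unit) (_ : Unit) => 1 + a ⬝ᵥ a) := by
    ext p q
    rcases p with i | u <;> rcases q with j | v
    · simp only [Matrix.submatrix_apply, sAE_inl, Matrix.add_apply, Matrix.of_apply,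
        Matrix.one_apply, Matrix.fromBlocks_apply₁₁, hA, Matrix.mul_apply,
        Matrix.transpose_apply, hB, Fin.succAbove_right_inj]
      rw [Fin.sum_univ_eq_sum_range (fun k => f (s.succAbove i) k * f (s.succAbove j) k) n]
    · simp only [Matrix.submatrix_apply, sAE_inl, sAE_inr, Matrix.add_apply, Matrix.of_apply,
        Matrix.one_apply, Matrix.fromBlocks_apply₁₂, Matrix.mulVec, dotProduct, hB, ha,
        if_neg (Fin.succAbove_ne s i)]
      rw [Fin.sum_univ_eq_sum_range (fun k => f (s.succAbove i) k * f s k) n]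
      simp
    · simp only [Matrix.submatrix_apply, sAE_inl, sAE_inr, Matrix.add_apply, Matrix.of_apply,
        Matrix.one_apply, Matrix.fromBlocks_apply₂₁, Matrix.mulVec, dotProduct, hB, ha,
        if_neg (Ne.symm (Fin.succAbove_ne s j))]
      rw [show (∑ k : Fin n, f (s.succAbove j) (k : ℕ) * f s (k : ℕ))
          = ∑ k : Fin n, f s (k : ℕ) * f (s.succAbove j) (k : ℕ) from
        Finset.sum_congr rfl fun k _ => mul_comm _ _]
      rw [Fin.sum_univ_eq_sum_range (fun k => f s k * f (s.succAbove j) k) n]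
      simp
    · simp only [Matrix.submatrix_apply, sAE_inr, Matrix.add_apply, Matrix.of_apply,
        Matrix.one_apply, Matrix.fromBlocks_apply₂₂, dotProduct, ha, if_true]
      rw [Fin.sum_univ_eq_sum_range (fun k => f s k * f s k) n]
  have hbig : (1 + Matrix.of fun i j : Fin (m + 1) =>
        ∑ k ∈ Finset.range n, f i k * f j k).det
      = A.det * ((1 + a ⬝ᵥ a) - (B *ᵥ a) ⬝ᵥ x) := by
    rw [← Matrix.det_submatrix_equiv_self (sAE s), hsub]
    rw [hA] at hApd ⊢
    rw [det_block B a hApd, ← hA, ← hx]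
  rw [hbig, hsm, mul_div_cancel_left₀ _ (ne_of_gt hApd.det_pos)]
  have hxx : A *ᵥ x = B *ᵥ a := by
    rw [hx, mulVec_mulVec, Matrix.mul_nonsing_inv _ hApd.det_pos.ne'.isUnit, one_mulVec]
  rw [hA] at hxx
  rw [dot_identity B a x hxx]
  have e1 : x ⬝ᵥ x = ∑ r, x r ^ 2 := by
    simp [dotProduct, sq]
  have e2 : (a - Bᵀ *ᵥ x) ⬝ᵥ (a - Bᵀ *ᵥ x)
      = ∑ k ∈ Finset.range n, (f s k - ∑ r, x r * f (s.succAbove r) k) ^ 2 := by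
    rw [← Fin.sum_univ_eq_sum_range
      (fun k : ℕ => (f s k - ∑ r, x r * f (s.succAbove r) k) ^ 2) n]
    simp only [dotProduct, Pi.sub_apply, Matrix.mulVec, Matrix.transpose_apply, hB, ha,
      Matrix.of_apply]
    exact Finset.sum_congr rfl fun k _ => by
      rw [show (∑ r, f (s.succAbove r) (k : ℕ) * x r)
          = ∑ r, x r * f (s.succAbove r) (k : ℕ) from
        Finset.sum_congr rfl fun r _ => mul_comm _ _]
      ring
  rw [e1, e2]

end DetGramAux


/-- If no nontrivial linear combination of the vectors `f 0, …, f m : ℕ → ℝ` lies in `ℓ²(ℕ)`,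
then for every `s` the ratio `det(I_{m+1} + γ(f₀⁽ⁿ⁾,…,f_m⁽ⁿ⁾)) / det(I_m + γ(…, f̂_s⁽ⁿ⁾, …))`
tends to `+∞` as `n → ∞`. -/
theorem det_one_add_gram_ratio_tendsto_atTop (m : ℕ) (f : Fin (m + 1) → ℕ → ℝ)
    (hf : ∀ C : Fin (m + 1) → ℝ, C ≠ 0 →
      Tendsto (fun n => ∑ k ∈ Finset.range n, (∑ r, C r * f r k) ^ 2) atTop atTop) :
    ∀ s : Fin (m + 1),
      Tendsto (fun n =>
          (Matrix.det (1 + Matrix.of fun i j : Fin (m + 1) =>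
              ∑ k ∈ Finset.range n, f i k * f j k)) /
          (Matrix.det (1 + Matrix.of fun i j : Fin m =>
              ∑ k ∈ Finset.range n, f (s.succAbove i) k * f (s.succAbove j) k)))
        atTop atTop := by
  intro s
  rw [tendsto_atTop]
  intro M
  obtain ⟨N, hN⟩ := DetGramAux.uniform_bound f hf s M
  filter_upwards [eventually_ge_atTop N] with n hn
  obtain ⟨c, hc⟩ := DetGramAux.key_step f s n
  rw [hc]
  exact hN n hn c
end

section
/- Let f_0, f_1 : ℕ → ℝ be two infinite real vectors such that for every nonzero pair (C_0, C_1) ∈ ℝ², the series ∑_{k∈ℕ} |C_0 f_0(k) + C_1 f_1(k)|² diverges to infinity. Then Γ(f_0^{(n)}, f_1^{(n)}) / Γ(f_1^{(n)}) → +∞ as n → ∞, and likewise Γ(f_0^{(n)}, f_1^{(n)}) / Γ(f_0^{(n)}) → +∞ as n → ∞. -/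
open Matrix Filter Finset

private def Qf (f₀ f₁ : ℕ → ℝ) (n : ℕ) (p : ℝ × ℝ) : ℝ :=
  ∑ k ∈ Finset.range n, (p.1 * f₀ k + p.2 * f₁ k) ^ 2

private lemma Qf_nonneg (f₀ f₁ : ℕ → ℝ) (n : ℕ) (p : ℝ × ℝ) : 0 ≤ Qf f₀ f₁ n p :=
  Finset.sum_nonneg fun k _ => sq_nonneg _

private lemma Qf_mono (f₀ f₁ : ℕ → ℝ) (p : ℝ × ℝ) {a b : ℕ} (hab : a ≤ b) :
    Qf f₀ f₁ a p ≤ Qf f₀ f₁ b p :=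
  Finset.sum_le_sum_of_subset_of_nonneg (Finset.range_subset_range.2 hab)
    (fun k _ _ => sq_nonneg _)

private lemma Qf_cont (f₀ f₁ : ℕ → ℝ) (n : ℕ) : Continuous (Qf f₀ f₁ n) := by
  unfold Qf
  exact continuous_finset_sum _ fun k _ => by fun_prop

private lemma Qf_smul (f₀ f₁ : ℕ → ℝ) (n : ℕ) (t : ℝ) (p : ℝ × ℝ) :
    Qf f₀ f₁ n (t • p) = t ^ 2 * Qf f₀ f₁ n p := by
  unfold Qf
  rw [Finset.mul_sum]
  refine Finset.sum_congr rfl fun k _ => ?_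
  simp only [Prod.smul_fst, Prod.smul_snd, smul_eq_mul]
  ring

private lemma Qf_key (f₀ f₁ : ℕ → ℝ)
    (hf : ∀ C₀ C₁ : ℝ, (C₀, C₁) ≠ 0 →
      Tendsto (fun n => ∑ k ∈ Finset.range n, (C₀ * f₀ k + C₁ * f₁ k) ^ 2) atTop atTop)
    (M : ℝ) : ∃ N, ∀ n ≥ N, ∀ p : ℝ × ℝ, p.1 ^ 2 + p.2 ^ 2 = 1 → M ≤ Qf f₀ f₁ n p := by
  set S : Set (ℝ × ℝ) := {p | p.1 ^ 2 + p.2 ^ 2 = 1} with hS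
  have hSc : IsCompact S := by
    apply Metric.isCompact_of_isClosed_isBounded
    · exact isClosed_eq (by fun_prop) continuous_const
    · rw [isBounded_iff_forall_norm_le]
      refine ⟨1, fun p hp => ?_⟩
      have hp' : p.1 ^ 2 + p.2 ^ 2 = 1 := hp
      have h1 : |p.1| ≤ 1 := by rw [abs_le]; constructor <;> nlinarith [sq_nonneg p.2]
      have h2 : |p.2| ≤ 1 := by rw [abs_le]; constructor <;> nlinarith [sq_nonneg p.1]
      calc ‖p‖ = max ‖p.1‖ ‖p.2‖ := rfl
        _ ≤ 1 := max_le (by simpa using h1) (by simpa using h2)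
  -- for each p, choose a stage where Q exceeds M (for p ∈ S)
  have hex : ∀ p : ℝ × ℝ, ∃ N, p ∈ S → M < Qf f₀ f₁ N p := by
    intro p
    by_cases hp : p ∈ S
    · have hp0 : (p.1, p.2) ≠ (0 : ℝ × ℝ) := by
        intro h
        have h1 : p.1 = 0 := congrArg Prod.fst h
        have h2 : p.2 = 0 := congrArg Prod.snd h
        have : p.1 ^ 2 + p.2 ^ 2 = 1 := hp
        rw [h1, h2] at this; norm_num at this
      have := (hf p.1 p.2 hp0).eventually_gt_atTop M
      obtain ⟨N, hN⟩ := this.exists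
      exact ⟨N, fun _ => hN⟩
    · exact ⟨0, fun h => absurd h hp⟩
  choose Nf hNf using hex
  set U : ℝ × ℝ → Set (ℝ × ℝ) := fun p => (Qf f₀ f₁ (Nf p)) ⁻¹' Set.Ioi M with hU
  have hUopen : ∀ p, IsOpen (U p) := fun p => (isOpen_Ioi).preimage (Qf_cont f₀ f₁ (Nf p))
  obtain ⟨t, htS, htcov⟩ := hSc.elim_nhds_subcover U
    (fun p hp => (hUopen p).mem_nhds (hNf p hp))
  refine ⟨t.sup Nf, fun n hn p hp => ?_⟩
  have hpS : p ∈ S := hp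
  obtain ⟨q, hqt, hpq⟩ := Set.mem_iUnion₂.1 (htcov hpS)
  have h1 : M < Qf f₀ f₁ (Nf q) p := hpq
  have h2 : Qf f₀ f₁ (Nf q) p ≤ Qf f₀ f₁ n p :=
    Qf_mono f₀ f₁ p (le_trans (Finset.le_sup hqt) hn)
  linarith

private lemma gram_half (f₀ f₁ : ℕ → ℝ)
    (hf : ∀ C₀ C₁ : ℝ, (C₀, C₁) ≠ 0 →
      Tendsto (fun n => ∑ k ∈ Finset.range n, (C₀ * f₀ k + C₁ * f₁ k) ^ 2) atTop atTop) :
    Tendsto (fun n =>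
        ((∑ k ∈ Finset.range n, f₀ k ^ 2) * (∑ k ∈ Finset.range n, f₁ k ^ 2)
          - (∑ k ∈ Finset.range n, f₀ k * f₁ k) * (∑ k ∈ Finset.range n, f₀ k * f₁ k))
        / ∑ k ∈ Finset.range n, f₁ k ^ 2) atTop atTop := by
  rw [tendsto_atTop]
  intro M
  set M' : ℝ := max M 0 with hM'
  have hM'0 : 0 ≤ M' := le_max_right _ _
  obtain ⟨N, hN⟩ := Qf_key f₀ f₁ hf M'
  have hC : ∀ᶠ n in atTop, 1 ≤ ∑ k ∈ Finset.range n, f₁ k ^ 2 := by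
    have h01 : ((0 : ℝ), (1 : ℝ)) ≠ 0 := by simp [Prod.ext_iff]
    have := (hf 0 1 h01).eventually_ge_atTop 1
    refine this.mono fun n hn => ?_
    refine le_trans hn (le_of_eq ?_)
    exact Finset.sum_congr rfl fun k _ => by ring
  filter_upwards [hC, eventually_ge_atTop N] with n hCn hnN
  set A := ∑ k ∈ Finset.range n, f₀ k ^ 2 with hA
  set B := ∑ k ∈ Finset.range n, f₀ k * f₁ k with hB
  set C := ∑ k ∈ Finset.range n, f₁ k ^ 2 with hC2
  have hCpos : 0 < C := lt_of_lt_of_le one_pos hCn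
  set w : ℝ × ℝ := (C, -B) with hw
  have hQw : Qf f₀ f₁ n w = C * (A * C - B * B) := by
    unfold Qf
    have h : ∀ k ∈ Finset.range n, (w.1 * f₀ k + w.2 * f₁ k) ^ 2
        = C ^ 2 * f₀ k ^ 2 + (-(2 * C * B)) * (f₀ k * f₁ k) + B ^ 2 * f₁ k ^ 2 := by
      intro k _
      simp only [hw]
      ring
    rw [Finset.sum_congr rfl h, Finset.sum_add_distrib, Finset.sum_add_distrib,
      ← Finset.mul_sum, ← Finset.mul_sum, ← Finset.mul_sum, ← hA, ← hB, ← hC2]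
    ring
  set r : ℝ := Real.sqrt (C ^ 2 + B ^ 2) with hr
  have hr2 : r ^ 2 = C ^ 2 + B ^ 2 :=
    Real.sq_sqrt (by positivity)
  have hrpos : 0 < r := Real.sqrt_pos.2 (by nlinarith [sq_nonneg B])
  set u : ℝ × ℝ := r⁻¹ • w with hu
  have hu1 : u.1 ^ 2 + u.2 ^ 2 = 1 := by
    simp only [hu, Prod.smul_fst, Prod.smul_snd, smul_eq_mul, hw]
    field_simp
    nlinarith [hr2]
  have hQu : M' ≤ Qf f₀ f₁ n u := hN n hnN u hu1
  have hQwu : Qf f₀ f₁ n w = r ^ 2 * Qf f₀ f₁ n u := by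
    have := Qf_smul f₀ f₁ n r u
    have hru : r • u = w := by
      simp only [hu, smul_smul, mul_inv_cancel₀ (ne_of_gt hrpos), one_smul]
    rw [hru] at this
    exact this
  have hkey : C * M' ≤ A * C - B * B := by
    have h1 : r ^ 2 * M' ≤ r ^ 2 * Qf f₀ f₁ n u :=
      mul_le_mul_of_nonneg_left hQu (by positivity)
    have h2 : C ^ 2 * M' ≤ r ^ 2 * M' := by nlinarith [sq_nonneg B]
    have h3 : C ^ 2 * M' ≤ C * (A * C - B * B) := by
      rw [← hQw, hQwu]; linarith
    nlinarith [hCpos]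
  have : M' ≤ (A * C - B * B) / C := (le_div_iff₀ hCpos).2 (by linarith [hkey])
  exact le_trans (le_max_left M 0) this

/-- If no nontrivial linear combination of `f₀, f₁ : ℕ → ℝ` lies in `ℓ²(ℕ)`, then
`Γ(f₀⁽ⁿ⁾, f₁⁽ⁿ⁾)/Γ(f₁⁽ⁿ⁾) → +∞` and `Γ(f₀⁽ⁿ⁾, f₁⁽ⁿ⁾)/Γ(f₀⁽ⁿ⁾) → +∞` as `n → ∞`. -/
theorem gram_ratio_tendsto_atTop_two (f₀ f₁ : ℕ → ℝ)
    (hf : ∀ C₀ C₁ : ℝ, (C₀, C₁) ≠ 0 →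
      Tendsto (fun n => ∑ k ∈ Finset.range n, (C₀ * f₀ k + C₁ * f₁ k) ^ 2) atTop atTop) :
    Tendsto (fun n =>
        (Matrix.det !![∑ k ∈ Finset.range n, f₀ k * f₀ k, ∑ k ∈ Finset.range n, f₀ k * f₁ k;
            ∑ k ∈ Finset.range n, f₁ k * f₀ k, ∑ k ∈ Finset.range n, f₁ k * f₁ k]) /
          (∑ k ∈ Finset.range n, f₁ k ^ 2)) atTop atTop ∧
    Tendsto (fun n =>
        (Matrix.det !![∑ k ∈ Finset.range n, f₀ k * f₀ k, ∑ k ∈ Finset.range n, f₀ k * f₁ k;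
            ∑ k ∈ Finset.range n, f₁ k * f₀ k, ∑ k ∈ Finset.range n, f₁ k * f₁ k]) /
          (∑ k ∈ Finset.range n, f₀ k ^ 2)) atTop atTop := by
  have e00 : ∀ n, ∑ k ∈ Finset.range n, f₀ k * f₀ k = ∑ k ∈ Finset.range n, f₀ k ^ 2 :=
    fun n => Finset.sum_congr rfl fun k _ => (sq (f₀ k)).symm
  have e11 : ∀ n, ∑ k ∈ Finset.range n, f₁ k * f₁ k = ∑ k ∈ Finset.range n, f₁ k ^ 2 :=
    fun n => Finset.sum_congr rfl fun k _ => (sq (f₁ k)).symm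
  have e10 : ∀ n, ∑ k ∈ Finset.range n, f₁ k * f₀ k = ∑ k ∈ Finset.range n, f₀ k * f₁ k :=
    fun n => Finset.sum_congr rfl fun k _ => mul_comm _ _
  constructor
  · refine (gram_half f₀ f₁ hf).congr fun n => ?_
    rw [Matrix.det_fin_two_of, e00, e11, e10]
  · have hf' : ∀ C₀ C₁ : ℝ, (C₀, C₁) ≠ 0 →
        Tendsto (fun n => ∑ k ∈ Finset.range n, (C₀ * f₁ k + C₁ * f₀ k) ^ 2) atTop atTop := by
      intro C₀ C₁ h
      have h' : ((C₁ : ℝ), (C₀ : ℝ)) ≠ 0 := by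
        simp only [Prod.ext_iff, ne_eq, not_and_or] at h ⊢
        tauto
      exact (hf C₁ C₀ h').congr fun n => Finset.sum_congr rfl fun k _ => by ring
    refine (gram_half f₁ f₀ hf').congr fun n => ?_
    rw [Matrix.det_fin_two_of, e00, e11, e10]
    have e01 : ∑ k ∈ Finset.range n, f₁ k * f₀ k = ∑ k ∈ Finset.range n, f₀ k * f₁ k := e10 n
    ring
end

section
/- Let f_0, f_1, f_2 : ℕ → ℝ be three infinite real vectors such that for every nonzero triple (C_0, C_1, C_2) ∈ ℝ³, the series ∑_{k∈ℕ} |C_0 f_0(k) + C_1 f_1(k) + C_2 f_2(k)|² diverges to infinity. Then for every pair r, s with 0 ≤ r < s ≤ 2, the ratio Γ(f_0^{(n)}, f_1^{(n)}, f_2^{(n)}) / Γ(f_r^{(n)}, f_s^{(n)}) tends to +∞ as n → ∞. -/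
open Matrix Filter Finset

/-- Expansion of the sum of squares of a linear combination. -/
lemma expand3 (u v w : ℕ → ℝ) (a b c : ℝ) (n : ℕ) :
    ∑ k ∈ Finset.range n, (a * v k + b * w k + c * u k) ^ 2 =
      c ^ 2 * (∑ k ∈ Finset.range n, u k * u k)
      + a ^ 2 * (∑ k ∈ Finset.range n, v k * v k)
      + b ^ 2 * (∑ k ∈ Finset.range n, w k * w k)
      + 2 * c * a * (∑ k ∈ Finset.range n, u k * v k)
      + 2 * c * b * (∑ k ∈ Finset.range n, u k * w k)
      + 2 * a * b * (∑ k ∈ Finset.range n, v k * w k) := by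
  induction n with
  | zero => simp
  | succ n ih => simp [Finset.sum_range_succ, ih]; ring

/-- The key compactness lemma. -/
lemma key3 (f : Fin 3 → ℕ → ℝ)
    (hf : ∀ C : Fin 3 → ℝ, C ≠ 0 →
      Tendsto (fun n => ∑ k ∈ Finset.range n, (∑ r, C r * f r k) ^ 2) atTop atTop)
    (M : ℝ) :
    ∃ N, ∀ n ≥ N, ∀ C : Fin 3 → ℝ,
      M * (∑ i, C i ^ 2) ≤ ∑ k ∈ Finset.range n, (∑ i, C i * f i k) ^ 2 := by
  set S : Set (Fin 3 → ℝ) := {C | ∑ i, C i ^ 2 = 1} with hS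
  have hScomp : IsCompact S := by
    apply Metric.isCompact_of_isClosed_isBounded
    · exact isClosed_eq (by fun_prop) continuous_const
    · apply Bornology.IsBounded.subset (Metric.isBounded_closedBall (x := (0:Fin 3 → ℝ)) (r := 1))
      intro C hC
      simp only [Metric.mem_closedBall, dist_zero_right]
      rw [pi_norm_le_iff_of_nonneg (by norm_num)]
      intro i
      have h1 : C i ^ 2 ≤ 1 := by
        rw [← hC.out]
        exact Finset.single_le_sum (fun j _ => sq_nonneg (C j)) (Finset.mem_univ i)
      rw [Real.norm_eq_abs]
      nlinarith [abs_nonneg (C i), sq_abs (C i)]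
  set g : ℕ → (Fin 3 → ℝ) → ℝ := fun n C => ∑ k ∈ Finset.range n, (∑ i, C i * f i k) ^ 2 with hg
  have hgcont : ∀ n, Continuous (g n) := by
    intro n
    apply continuous_finset_sum
    intro k _
    fun_prop
  have hgmono : ∀ (C : Fin 3 → ℝ) {m n : ℕ}, m ≤ n → g m C ≤ g n C := by
    intro C m n hmn
    apply Finset.sum_le_sum_of_subset_of_nonneg (Finset.range_subset_range.2 hmn)
    intro k _ _
    positivity
  set U : ℕ → Set (Fin 3 → ℝ) := fun n => {C | M < g n C} with hU
  have hUopen : ∀ n, IsOpen (U n) := fun n => isOpen_lt continuous_const (hgcont n)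
  have hcover : S ⊆ ⋃ n, U n := by
    intro C hC
    have hC0 : C ≠ 0 := by
      intro h0
      rw [h0] at hC
      simp [hS] at hC
    have := (tendsto_atTop.1 (hf C hC0) (M + 1)).exists
    obtain ⟨n, hn⟩ := this
    exact Set.mem_iUnion.2 ⟨n, by simpa [hU, hg] using lt_of_lt_of_le (lt_add_one M) hn⟩
  obtain ⟨t, ht⟩ := hScomp.elim_finite_subcover U hUopen hcover
  set N := t.sup id with hN
  refine ⟨N, fun n hn C => ?_⟩
  rcases eq_or_ne (∑ i, C i ^ 2) 0 with h0 | h0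
  · rw [h0, mul_zero]
    positivity
  · have hpos : 0 < ∑ i, C i ^ 2 :=
      lt_of_le_of_ne (Finset.sum_nonneg fun i _ => sq_nonneg _) (Ne.symm h0)
    set c : ℝ := Real.sqrt (∑ i, C i ^ 2) with hc
    have hcpos : 0 < c := Real.sqrt_pos.2 hpos
    have hc2 : c ^ 2 = ∑ i, C i ^ 2 := Real.sq_sqrt hpos.le
    set D : Fin 3 → ℝ := fun i => c⁻¹ * C i with hD
    have hDS : D ∈ S := by
      show (∑ i, D i ^ 2) = 1
      simp only [hD, mul_pow, ← Finset.mul_sum, ← hc2]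
      field_simp
    obtain ⟨m, hmt, hmD⟩ := Set.mem_iUnion₂.1 (ht hDS)
    have hmN : m ≤ N := Finset.le_sup (f := id) hmt
    have hMD : M ≤ g n D := le_of_lt (lt_of_lt_of_le hmD (hgmono D (hmN.trans hn)))
    have hgscale : g n C = c ^ 2 * g n D := by
      simp only [hg, Finset.mul_sum]
      apply Finset.sum_congr rfl
      intro k _
      have : ∑ i, D i * f i k = c⁻¹ * ∑ i, C i * f i k := by
        rw [Finset.mul_sum]
        apply Finset.sum_congr rfl
        intro i _
        simp [hD]; ring
      rw [this, mul_pow]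
      field_simp
    calc M * (∑ i, C i ^ 2) = c ^ 2 * M := by rw [hc2]; ring
    _ ≤ c ^ 2 * g n D := by nlinarith
    _ = g n C := hgscale.symm
lemma aux_ratio (uu uv uw vv vw ww : ℕ → ℝ)
    (hkey : ∀ M : ℝ, ∃ N, ∀ n ≥ N, ∀ c a b : ℝ,
      M * (c ^ 2 + a ^ 2 + b ^ 2) ≤
        c ^ 2 * uu n + a ^ 2 * vv n + b ^ 2 * ww n
        + 2 * c * a * uv n + 2 * c * b * uw n + 2 * a * b * vw n) :
    Tendsto (fun n =>
        (uu n * (vv n * ww n - vw n * vw n) - uv n * (uv n * ww n - vw n * uw n)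
          + uw n * (uv n * vw n - vv n * uw n)) / (vv n * ww n - vw n * vw n))
      atTop atTop := by
  rw [tendsto_atTop]
  intro M₀
  set M := max M₀ 1 with hM
  have hM1 : (1:ℝ) ≤ M := le_max_right _ _
  have hM0 : M₀ ≤ M := le_max_left _ _
  obtain ⟨N, hN⟩ := hkey M
  filter_upwards [eventually_ge_atTop N] with n hn
  have H := hN n hn
  have hvv : M ≤ vv n := by have := H 0 1 0; nlinarith
  have hd2 : M * (vw n ^ 2 + vv n ^ 2) ≤ vv n * (vv n * ww n - vw n * vw n) := by
    have := H 0 (vw n) (-vv n); nlinarith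
  have hvvpos : 0 < vv n := by nlinarith
  have d2pos : 0 < vv n * ww n - vw n * vw n := by nlinarith [sq_nonneg (vw n)]
  set d2 := vv n * ww n - vw n * vw n with hd2def
  set a := (uv n * ww n - uw n * vw n) / d2 with ha
  set b := (uw n * vv n - uv n * vw n) / d2 with hb
  have h1 : uv n = a * vv n + b * vw n := by
    rw [ha, hb]; field_simp; ring
  have h2 : uw n = a * vw n + b * ww n := by
    rw [ha, hb]; field_simp; ring
  have hq : M ≤ uu n - 2 * a * uv n - 2 * b * uw n + a ^ 2 * vv n
      + 2 * a * b * vw n + b ^ 2 * ww n := by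
    have := H 1 (-a) (-b); nlinarith
  have hid : uu n * (vv n * ww n - vw n * vw n) - uv n * (uv n * ww n - vw n * uw n)
      + uw n * (uv n * vw n - vv n * uw n)
      = (uu n - 2 * a * uv n - 2 * b * uw n + a ^ 2 * vv n
        + 2 * a * b * vw n + b ^ 2 * ww n) * d2 := by
    rw [h1, h2]; ring
  rw [hid]
  rw [mul_div_assoc, div_self (ne_of_gt d2pos), mul_one]
  linarith


/-- If no nontrivial linear combination of `f 0, f 1, f 2 : ℕ → ℝ` lies in `ℓ²(ℕ)`, then
for all `r < s` the ratio `Γ(f₀⁽ⁿ⁾, f₁⁽ⁿ⁾, f₂⁽ⁿ⁾) / Γ(f_r⁽ⁿ⁾, f_s⁽ⁿ⁾)` tends to `+∞`. -/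
theorem gram_ratio_tendsto_atTop_three (f : Fin 3 → ℕ → ℝ)
    (hf : ∀ C : Fin 3 → ℝ, C ≠ 0 →
      Tendsto (fun n => ∑ k ∈ Finset.range n, (∑ r, C r * f r k) ^ 2) atTop atTop) :
    ∀ r s : Fin 3, r < s →
      Tendsto (fun n =>
          (Matrix.det (Matrix.of fun i j : Fin 3 =>
              ∑ k ∈ Finset.range n, f i k * f j k)) /
          (Matrix.det !![∑ k ∈ Finset.range n, f r k * f r k,
              ∑ k ∈ Finset.range n, f r k * f s k;
              ∑ k ∈ Finset.range n, f s k * f r k,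
              ∑ k ∈ Finset.range n, f s k * f s k]))
        atTop atTop := by
  intro r s hrs
  fin_cases r <;> fin_cases s <;>
    first | exact absurd hrs (by decide) | clear hrs
  · refine (aux_ratio (fun n => ∑ k ∈ Finset.range n, f 2 k * f 2 k)
        (fun n => ∑ k ∈ Finset.range n, f 2 k * f 0 k)
        (fun n => ∑ k ∈ Finset.range n, f 2 k * f 1 k)
        (fun n => ∑ k ∈ Finset.range n, f 0 k * f 0 k)
        (fun n => ∑ k ∈ Finset.range n, f 0 k * f 1 k)
        (fun n => ∑ k ∈ Finset.range n, f 1 k * f 1 k) ?_).congr fun n => ?_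
    · intro M
      obtain ⟨N, hN⟩ := key3 f hf M
      refine ⟨N, fun n hn c a b => ?_⟩
      have h := hN n hn ![a, b, c]
      have hsum : (∑ i, (![a, b, c]) i ^ 2) = c^2 + a^2 + b^2 := by
        simp [Fin.sum_univ_three]; try ring
      have h1 : ∀ k, (∑ i, (![a, b, c]) i * f i k) = a * f 0 k + b * f 1 k + c * f 2 k := by
        intro k; simp [Fin.sum_univ_three]; try ring
      rw [hsum] at h
      simp only [h1] at h
      rw [expand3 (f 2) (f 0) (f 1) a b c n] at h
      linarith
    · have hsym : ∀ i j : Fin 3, (∑ k ∈ Finset.range n, f i k * f j k)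
          = ∑ k ∈ Finset.range n, f j k * f i k :=
        fun i j => Finset.sum_congr rfl fun k _ => mul_comm _ _
      simp only [Matrix.det_fin_three, Matrix.det_fin_two_of, Matrix.of_apply,
        show (⟨0, by omega⟩ : Fin 3) = 0 from rfl, show (⟨1, by omega⟩ : Fin 3) = 1 from rfl,
        show (⟨2, by omega⟩ : Fin 3) = 2 from rfl]
      rw [hsym 0 2, hsym 1 2, hsym 1 0]
      ring
  · refine (aux_ratio (fun n => ∑ k ∈ Finset.range n, f 1 k * f 1 k)
        (fun n => ∑ k ∈ Finset.range n, f 1 k * f 0 k)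
        (fun n => ∑ k ∈ Finset.range n, f 1 k * f 2 k)
        (fun n => ∑ k ∈ Finset.range n, f 0 k * f 0 k)
        (fun n => ∑ k ∈ Finset.range n, f 0 k * f 2 k)
        (fun n => ∑ k ∈ Finset.range n, f 2 k * f 2 k) ?_).congr fun n => ?_
    · intro M
      obtain ⟨N, hN⟩ := key3 f hf M
      refine ⟨N, fun n hn c a b => ?_⟩
      have h := hN n hn ![a, c, b]
      have hsum : (∑ i, (![a, c, b]) i ^ 2) = c^2 + a^2 + b^2 := by
        simp [Fin.sum_univ_three]; try ring
      have h1 : ∀ k, (∑ i, (![a, c, b]) i * f i k) = a * f 0 k + b * f 2 k + c * f 1 k := by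
        intro k; simp [Fin.sum_univ_three]; try ring
      rw [hsum] at h
      simp only [h1] at h
      rw [expand3 (f 1) (f 0) (f 2) a b c n] at h
      linarith
    · have hsym : ∀ i j : Fin 3, (∑ k ∈ Finset.range n, f i k * f j k)
          = ∑ k ∈ Finset.range n, f j k * f i k :=
        fun i j => Finset.sum_congr rfl fun k _ => mul_comm _ _
      simp only [Matrix.det_fin_three, Matrix.det_fin_two_of, Matrix.of_apply,
        show (⟨0, by omega⟩ : Fin 3) = 0 from rfl, show (⟨1, by omega⟩ : Fin 3) = 1 from rfl,
        show (⟨2, by omega⟩ : Fin 3) = 2 from rfl]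
      rw [hsym 1 0, hsym 2 1, hsym 2 0]
      ring
  · refine (aux_ratio (fun n => ∑ k ∈ Finset.range n, f 0 k * f 0 k)
        (fun n => ∑ k ∈ Finset.range n, f 0 k * f 1 k)
        (fun n => ∑ k ∈ Finset.range n, f 0 k * f 2 k)
        (fun n => ∑ k ∈ Finset.range n, f 1 k * f 1 k)
        (fun n => ∑ k ∈ Finset.range n, f 1 k * f 2 k)
        (fun n => ∑ k ∈ Finset.range n, f 2 k * f 2 k) ?_).congr fun n => ?_
    · intro M
      obtain ⟨N, hN⟩ := key3 f hf M
      refine ⟨N, fun n hn c a b => ?_⟩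
      have h := hN n hn ![c, a, b]
      have hsum : (∑ i, (![c, a, b]) i ^ 2) = c^2 + a^2 + b^2 := by
        simp [Fin.sum_univ_three]; try ring
      have h1 : ∀ k, (∑ i, (![c, a, b]) i * f i k) = a * f 1 k + b * f 2 k + c * f 0 k := by
        intro k; simp [Fin.sum_univ_three]; try ring
      rw [hsum] at h
      simp only [h1] at h
      rw [expand3 (f 0) (f 1) (f 2) a b c n] at h
      linarith
    · have hsym : ∀ i j : Fin 3, (∑ k ∈ Finset.range n, f i k * f j k)
          = ∑ k ∈ Finset.range n, f j k * f i k :=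
        fun i j => Finset.sum_congr rfl fun k _ => mul_comm _ _
      simp only [Matrix.det_fin_three, Matrix.det_fin_two_of, Matrix.of_apply,
        show (⟨0, by omega⟩ : Fin 3) = 0 from rfl, show (⟨1, by omega⟩ : Fin 3) = 1 from rfl,
        show (⟨2, by omega⟩ : Fin 3) = 2 from rfl]
      rw [hsym 0 1, hsym 0 2, hsym 1 2]
      ring
end

section
/- Let x_1, …, x_n be vectors in ℝ^m and let λ_1, …, λ_n be nonzero real numbers. Then det(∑_{k=1}^n λ_k E_{kk} + γ(x_1, …, x_n)) = (∏_{k=1}^n λ_k) · (1 + ∑_{r=1}^n ∑_{1 ≤ i_1 < … < i_r ≤ n} (λ_{i_1} λ_{i_2} ⋯ λ_{i_r})⁻¹ · Γ(x_{i_1}, …, x_{i_r})), where E_{kk} is the n×n matrix unit with 1 in position (k,k) and zeros elsewhere. -/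
/-!
Factor `diag(λ) + γ = diag(λ) (1 + diag(λ)⁻¹ γ)`. Expanding `det (1 + M)` by multilinearity in
the rows gives the sum of all principal minors of `M`, and the principal minor of `diag(λ)⁻¹ γ`
on `S` is `(∏_{i ∈ S} λᵢ)⁻¹ Γ(x_S)`; the empty minor contributes the `1`.
-/

open Matrix Finset

namespace Matrix

variable {n : Type*} [Fintype n] [DecidableEq n]

theorem det_one_add_eq_sum_det_submatrix {R : Type*} [CommRing R] (M : Matrix n n R) :
    det (1 + M) = ∑ s : Finset n, (M.submatrix ((↑) : s → n) (↑)).det := by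
  rw [add_comm]
  change detRowAlternating (M.row + (1 : Matrix n n R).row) = _
  rw [detRowAlternating.map_add_univ]
  exact Finset.sum_congr rfl fun s _ => det_piecewise_one_eq_submatrix_det M s

theorem det_diagonal_add_eq_sum_det_submatrix {K : Type*} [Field K] (d : n → K)
    (hd : ∀ i, d i ≠ 0) (A : Matrix n n K) :
    det (diagonal d + A) =
      (∏ i, d i) * ∑ s : Finset n, (∏ i ∈ s, d i)⁻¹ * (A.submatrix ((↑) : s → n) (↑)).det := by
  have hfactor : diagonal d + A = diagonal d * (1 + diagonal d⁻¹ * A) := by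
    have hcancel : (diagonal fun i => d i * d⁻¹ i) = 1 := by
      simp only [Pi.inv_apply, mul_inv_cancel₀ (hd _), diagonal_one]
    rw [mul_add, mul_one, ← mul_assoc, diagonal_mul_diagonal, hcancel, one_mul]
  have hminor (s : Finset n) : (diagonal d⁻¹ * A).submatrix ((↑) : s → n) (↑) =
      diagonal (fun i : s => (d i)⁻¹) * A.submatrix (↑) (↑) := by
    ext i j
    simp [diagonal_mul]
  rw [hfactor, det_mul, det_diagonal, det_one_add_eq_sum_det_submatrix]
  simp_rw [hminor, det_mul, det_diagonal, Finset.prod_inv_distrib, Finset.prod_coe_sort]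

end Matrix

/-- For vectors `x₁, …, xₙ ∈ ℝᵐ` and nonzero reals `λ₁, …, λₙ`,
`det(diag(λ) + γ(x₁, …, xₙ)) = (∏ₖ λₖ) (1 + ∑_{∅ ≠ S ⊆ {1,…,n}} (∏_{i ∈ S} λᵢ)⁻¹ Γ(x_S))`,
where `Γ(x_S)` is the Gram determinant of the vectors indexed by `S`. -/
theorem det_diagonal_add_gram (m n : ℕ) (x : Fin n → Fin m → ℝ) (l : Fin n → ℝ)
    (hl : ∀ k, l k ≠ 0) :
    (Matrix.diagonal l + Matrix.of fun i j : Fin n => ∑ k : Fin m, x i k * x j k).det =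
      (∏ k, l k) *
        (1 + ∑ S ∈ (Finset.univ : Finset (Fin n)).powerset.filter Finset.Nonempty,
          (∏ i ∈ S, l i)⁻¹ *
            Matrix.det (Matrix.of fun i j : {a : Fin n // a ∈ S} =>
              ∑ k : Fin m, x i.1 k * x j.1 k)) := by
  have hnonempty : (univ : Finset (Finset (Fin n))).filter Finset.Nonempty = univ.erase ∅ := by
    simp_rw [nonempty_iff_ne_empty, filter_ne']
  rw [det_diagonal_add_eq_sum_det_submatrix l hl, powerset_univ, hnonempty,
    ← add_sum_erase _ _ (mem_univ ∅), prod_empty, inv_one, one_mul, det_isEmpty]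
  rfl
end

section
/- Let C be a real n×n matrix, a ∈ ℝ^n, and λ = (λ_1, …, λ_n) ∈ ℝ^n with each λ_k ≠ 0. Set C(λ) = diag(λ_1, …, λ_n) + C and P_C(λ) = det C(λ), and assume P_C(λ) ≠ 0. Then (C(λ)⁻¹ a, a) = (1/P_C(λ)) · (∏_{k=1}^n λ_k) · ∑_{r=1}^n ∑_{1 ≤ i_1 < … < i_r ≤ n} (λ_{i_1} ⋯ λ_{i_r})⁻¹ · (A(C_{i_1 … i_r}) a_{i_1 … i_r}, a_{i_1 … i_r}), where C_{i_1 … i_r} is the r×r principal submatrix of C on rows and columns i_1, …, i_r, a_{i_1 … i_r} = (a_{i_1}, …, a_{i_r}) ∈ ℝ^r, and A(C_{i_1 … i_r}) is the r×r matrix of first-order cofactors of C_{i_1 … i_r}, i.e. its (i,j) entry is (−1)^{i+j} times the determinant of C_{i_1 … i_r} with row i and column j deleted. -/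
/-!
`(M⁻¹ a, a) = det(M)⁻¹ (adj(M) a, a)`, and by the matrix determinant lemma
`(adj(M) a, a) = det(M + a aᵀ) - det M`. Expanding `det(diag λ + B) = ∑_S (∏_{i ∉ S} λᵢ) det B_S`
over principal minors for `B = C + a aᵀ` and `B = C`, the difference of the `S`-terms is
`(adj(C_S) a_S, a_S)`, again by the determinant lemma. The cofactor matrix of `C_S` is the
transpose of its adjugate, `S = ∅` contributes nothing, and `∏_{i ∉ S} λᵢ = (∏ λ) / ∏_{i ∈ S} λᵢ`.
-/

open Matrix Finset

theorem Finset.sum_finset_eq_add_sum_singleton {ι M : Type*} [Fintype ι] [DecidableEq ι]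
    [AddCommMonoid M] (f : Finset ι → M) (hf : ∀ s, 1 < #s → f s = 0) :
    ∑ s, f s = f ∅ + ∑ i, f {i} := by
  have hsmall : ∀ s ∉ insert ∅ (univ.map ⟨singleton, singleton_injective⟩), f s = 0 := by
    intro s hs
    refine hf s (lt_of_not_ge fun hle => hs ?_)
    rcases Nat.le_one_iff_eq_zero_or_eq_one.mp hle with h | h
    · simp [card_eq_zero.mp h]
    · obtain ⟨i, rfl⟩ := card_eq_one.mp h
      simp
  rw [← sum_subset (subset_univ _) fun s _ hs => hsmall s hs, sum_insert (by simp), sum_map]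
  rfl

theorem Finset.sum_finset_eq_sum_range_sum_card_eq_succ {ι M : Type*} [Fintype ι]
    [AddCommMonoid M] (f : Finset ι → M) (hf : f ∅ = 0) :
    ∑ s, f s = ∑ r ∈ range (Fintype.card ι), ∑ s : {s : Finset ι // #s = r + 1}, f s := by
  rw [← sum_fiberwise_of_maps_to (g := card) (t := range (Fintype.card ι + 1))
    fun s _ => mem_range.2 (Nat.lt_succ_of_le (card_le_univ s)), sum_range_succ']
  have hempty : ∑ s with #s = 0, f s = 0 :=
    sum_eq_zero fun s hs => by rw [card_eq_zero.1 (mem_filter.1 hs).2, hf]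
  rw [hempty, add_zero]
  exact sum_congr rfl fun r _ => sum_subtype _ (by simp) f

namespace Matrix

variable {n R : Type*} [Fintype n] [DecidableEq n] [CommRing R]

theorem vecMul_adjugate_apply (A : Matrix n n R) (v : n → R) (i : n) :
    (v ᵥ* adjugate A) i = (A.updateRow i v).det := by
  rw [← cramer_transpose_apply, cramer_eq_adjugate_mulVec, ← adjugate_transpose, mulVec_transpose]

/-- In the multilinear expansion of the rows, every row taken from `vecMulVec u v` is a multiple
of `v`, so only the subsets of at most one row contribute. -/
theorem det_add_vecMulVec (A : Matrix n n R) (u v : n → R) :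
    (A + vecMulVec u v).det = A.det + v ⬝ᵥ (adjugate A *ᵥ u) := by
  let D : (n → R) [⋀^n]→ₗ[R] R := detRowAlternating
  have hterm (s : Finset n) : D (s.piecewise (fun i => u i • v) A.row) =
      (∏ i ∈ s, u i) * D (s.piecewise (fun _ => v) A.row) := by
    rw [← smul_eq_mul, ← D.coe_multilinearMap, ← MultilinearMap.map_piecewise_smul]
    congr 1
    ext i : 1
    by_cases hi : i ∈ s <;> simp [hi]
  have hzero (s : Finset n) (hs : 1 < #s) : D (s.piecewise (fun i => u i • v) A.row) = 0 := by
    obtain ⟨i, hi, j, hj, hij⟩ := one_lt_card.mp hs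
    rw [hterm, D.map_eq_zero_of_eq _ (by simp [hi, hj]) hij, mul_zero]
  have hdet : (A + vecMulVec u v).det = D ((fun i => u i • v) + A.row) := by
    rw [add_comm]; rfl
  rw [hdet, D.map_add_univ, sum_finset_eq_add_sum_singleton _ hzero, dotProduct_mulVec]
  congr 1
  refine sum_congr rfl fun i _ => ?_
  rw [hterm, prod_singleton, vecMul_adjugate_apply, mul_comm, piecewise_singleton]
  rfl

theorem det_add_diagonal (B : Matrix n n R) (d : n → R) :
    (B + diagonal d).det =
      ∑ s : Finset n, (∏ i ∈ sᶜ, d i) * (B.submatrix ((↑) : s → n) (↑)).det := by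
  let D : (n → R) [⋀^n]→ₗ[R] R := detRowAlternating
  have hrows : (B + diagonal d).det = D (B.row + fun i => d i • (1 : Matrix n n R).row i) := by
    change _ = det (of fun i j => B i j + d i * (1 : Matrix n n R) i j)
    congr 1
    ext i j
    by_cases h : i = j <;> simp [h]
  rw [hrows, D.map_add_univ]
  refine sum_congr rfl fun s _ => ?_
  let P := s.piecewise B.row (1 : Matrix n n R).row
  have hpw : s.piecewise B.row (fun i => d i • (1 : Matrix n n R).row i) =
      sᶜ.piecewise (fun i => d i • P i) P := by
    ext i : 1
    by_cases hi : i ∈ s <;> simp [P, hi]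
  rw [hpw, ← D.coe_multilinearMap, MultilinearMap.map_piecewise_smul, smul_eq_mul]
  exact congrArg _ (det_piecewise_one_eq_submatrix_det B s)

-- Also true for singular `A`, where `A⁻¹ = 0` and `A.det⁻¹ = 0`.
theorem inv_mulVec_dotProduct {K : Type*} [Field K] (A : Matrix n n K) (a : n → K) :
    (A⁻¹ *ᵥ a) ⬝ᵥ a = A.det⁻¹ * ((adjugate A *ᵥ a) ⬝ᵥ a) := by
  rw [inv_def, Ring.inverse_eq_inv', smul_mulVec, smul_dotProduct, smul_eq_mul]

theorem adjugate_mulVec_dotProduct_self (A : Matrix n n R) (a : n → R) :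
    (adjugate A *ᵥ a) ⬝ᵥ a = (A + vecMulVec a a).det - A.det := by
  rw [det_add_vecMulVec, dotProduct_comm, add_sub_cancel_left]

theorem adjugate_diagonal_add_mulVec_dotProduct (d : n → R) (B : Matrix n n R) (a : n → R) :
    (adjugate (diagonal d + B) *ᵥ a) ⬝ᵥ a =
      ∑ s : Finset n, (∏ i ∈ sᶜ, d i) *
        ((adjugate (B.submatrix ((↑) : s → n) (↑)) *ᵥ (a ∘ (↑))) ⬝ᵥ (a ∘ (↑))) := by
  rw [adjugate_mulVec_dotProduct_self, add_comm (diagonal d), add_right_comm, det_add_diagonal,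
    det_add_diagonal, ← sum_sub_distrib]
  refine sum_congr rfl fun s _ => ?_
  rw [← mul_sub, adjugate_mulVec_dotProduct_self]
  rfl

theorem adjugate_submatrix_equiv_mulVec_dotProduct {m : Type*} [Fintype m] [DecidableEq m]
    (e : m ≃ n) (A : Matrix n n R) (a : n → R) :
    (adjugate (A.submatrix e e) *ᵥ (a ∘ e)) ⬝ᵥ (a ∘ e) = (adjugate A *ᵥ a) ⬝ᵥ a := by
  rw [adjugate_submatrix_equiv_self, submatrix_mulVec_equiv, comp_equiv_dotProduct_comp_equiv,
    Function.comp_assoc, Equiv.self_comp_symm, Function.comp_id]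

theorem transpose_adjugate_fin_succ {r : ℕ} (A : Matrix (Fin (r + 1)) (Fin (r + 1)) R) :
    (adjugate A)ᵀ =
      of fun i j : Fin (r + 1) => (-1) ^ ((i : ℕ) + (j : ℕ)) *
        (A.submatrix i.succAbove j.succAbove).det := by
  ext i j
  rw [transpose_apply, adjugate_fin_succ_eq_det_submatrix, of_apply]

theorem cofactor_mulVec_dotProduct_orderEmbOfFin {ι : Type*} [LinearOrder ι] (C : Matrix ι ι R)
    (a : ι → R) (S : Finset ι) {r : ℕ} (h : #S = r + 1) :
    ((of fun i j : Fin (r + 1) => (-1 : R) ^ ((i : ℕ) + (j : ℕ)) *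
        ((C.submatrix (S.orderEmbOfFin h) (S.orderEmbOfFin h)).submatrix
          i.succAbove j.succAbove).det) *ᵥ fun i => a (S.orderEmbOfFin h i)) ⬝ᵥ
        (fun i => a (S.orderEmbOfFin h i)) =
      (adjugate (C.submatrix ((↑) : S → ι) (↑)) *ᵥ (a ∘ (↑))) ⬝ᵥ (a ∘ (↑)) := by
  let e : Fin (r + 1) ≃ S := (S.orderIsoOfFin h).toEquiv
  have hC : C.submatrix (S.orderEmbOfFin h) (S.orderEmbOfFin h) =
      (C.submatrix ((↑) : S → ι) (↑)).submatrix e e := rfl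
  have ha : (fun i => a (S.orderEmbOfFin h i)) = (a ∘ (↑)) ∘ e := rfl
  rw [← transpose_adjugate_fin_succ, mulVec_transpose, ← dotProduct_mulVec, dotProduct_comm, hC,
    ha, adjugate_submatrix_equiv_mulVec_dotProduct]

end Matrix

theorem inv_diagonal_add_quadratic_form_expansion_general {n : ℕ} (C : Matrix (Fin n) (Fin n) ℝ)
    (a : Fin n → ℝ) (l : Fin n → ℝ) (hl : ∀ k, l k ≠ 0) :
    ((Matrix.diagonal l + C)⁻¹ *ᵥ a) ⬝ᵥ a =
      (1 / (Matrix.diagonal l + C).det) * (∏ k, l k) *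
        ∑ r ∈ Finset.range n, ∑ S : {s : Finset (Fin n) // s.card = r + 1},
          (∏ i ∈ S.1, l i)⁻¹ *
            (((Matrix.of fun i j : Fin (r + 1) =>
                  (-1 : ℝ) ^ ((i : ℕ) + (j : ℕ)) *
                    (((C.submatrix (S.1.orderEmbOfFin S.2) (S.1.orderEmbOfFin S.2)).submatrix
                        i.succAbove j.succAbove).det)) *ᵥ
                fun i : Fin (r + 1) => a (S.1.orderEmbOfFin S.2 i)) ⬝ᵥ
              fun i : Fin (r + 1) => a (S.1.orderEmbOfFin S.2 i)) := by
  rw [inv_mulVec_dotProduct, adjugate_diagonal_add_mulVec_dotProduct,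
    sum_finset_eq_sum_range_sum_card_eq_succ _ (by simp), Fintype.card_fin, one_div, mul_assoc]
  congr 1
  rw [mul_sum]
  refine sum_congr rfl fun r _ => ?_
  rw [mul_sum]
  refine sum_congr rfl fun S _ => ?_
  rw [cofactor_mulVec_dotProduct_orderEmbOfFin, ← prod_mul_prod_compl S.1 l]
  have hS : ∏ i ∈ S.1, l i ≠ 0 := prod_ne_zero_iff.mpr fun i _ => hl i
  field_simp

/-- Explicit expression for `(C(λ)⁻¹ a, a)` where `C(λ) = diag(λ) + C`:
`(C(λ)⁻¹ a, a) = P_C(λ)⁻¹ (∏ₖ λₖ) ∑_{∅ ≠ S} (∏_{i ∈ S} λᵢ)⁻¹ (A(C_S) a_S, a_S)`,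
where `C_S` is the principal submatrix of `C` on `S`, `a_S` the restriction of `a` to `S`,
and `A(C_S)` the matrix of first-order cofactors of `C_S`.  The sum over nonempty subsets
is organized by cardinality `r + 1` with `r` ranging over `0, …, n − 1`. -/
theorem inv_diagonal_add_quadratic_form_expansion {n : ℕ} (C : Matrix (Fin n) (Fin n) ℝ)
    (a : Fin n → ℝ) (l : Fin n → ℝ) (hl : ∀ k, l k ≠ 0)
    (hP : (Matrix.diagonal l + C).det ≠ 0) :
    ((Matrix.diagonal l + C)⁻¹ *ᵥ a) ⬝ᵥ a =
      (1 / (Matrix.diagonal l + C).det) * (∏ k, l k) *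
        ∑ r ∈ Finset.range n, ∑ S : {s : Finset (Fin n) // s.card = r + 1},
          (∏ i ∈ S.1, l i)⁻¹ *
            (((Matrix.of fun i j : Fin (r + 1) =>
                  (-1 : ℝ) ^ ((i : ℕ) + (j : ℕ)) *
                    (((C.submatrix (S.1.orderEmbOfFin S.2) (S.1.orderEmbOfFin S.2)).submatrix
                        i.succAbove j.succAbove).det)) *ᵥ
                fun i : Fin (r + 1) => a (S.1.orderEmbOfFin S.2 i)) ⬝ᵥ
              fun i : Fin (r + 1) => a (S.1.orderEmbOfFin S.2 i)) :=
  inv_diagonal_add_quadratic_form_expansion_general C a l hl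
end

section
/- Let n ∈ ℕ, let a_{rk} (1 ≤ r ≤ 3, 1 ≤ k ≤ n) be real numbers, and let λ_1, …, λ_n be positive reals. Let a = (a_{1k})_{k=1}^n ∈ ℝ^n, let C be the n×n matrix with entries C_{kr} = a_{2k} a_{2r} + a_{3k} a_{3r}, and let C(λ) = diag(λ_1, …, λ_n) + C. Define y_r = (a_{rk}/√λ_k)_{k=1}^n ∈ ℝ^n for r = 1, 2, 3. Then (C(λ)⁻¹ a, a) = (Γ(y_1) + Γ(y_1, y_2) + Γ(y_1, y_3) + Γ(y_1, y_2, y_3)) / (1 + Γ(y_2) + Γ(y_3) + Γ(y_2, y_3)). -/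
open Matrix Finset

/-- Case `m = 3`: with `C_{kr} = a₂ₖ a₂ᵣ + a₃ₖ a₃ᵣ`, `C(λ) = diag(λ) + C` (`λₖ > 0`), and
`y_r = (a_{rk}/√λₖ)ₖ` for `r = 1, 2, 3`, one has, with `a = (a₁ₖ)ₖ`,
`(C(λ)⁻¹ a, a) = (Γ(y₁) + Γ(y₁,y₂) + Γ(y₁,y₃) + Γ(y₁,y₂,y₃)) / (1 + Γ(y₂) + Γ(y₃) + Γ(y₂,y₃))`. -/
theorem inv_quadratic_form_eq_gram_ratio_three {n : ℕ} (a₁ a₂ a₃ : Fin n → ℝ)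
    (l : Fin n → ℝ) (hl : ∀ k, 0 < l k)
    (y₁ y₂ y₃ : Fin n → ℝ)
    (hy₁ : y₁ = fun k => a₁ k / Real.sqrt (l k))
    (hy₂ : y₂ = fun k => a₂ k / Real.sqrt (l k))
    (hy₃ : y₃ = fun k => a₃ k / Real.sqrt (l k)) :
    ((Matrix.diagonal l + Matrix.of fun k r : Fin n => a₂ k * a₂ r + a₃ k * a₃ r)⁻¹ *ᵥ a₁)
        ⬝ᵥ a₁ =
      (y₁ ⬝ᵥ y₁ + Matrix.det !![y₁ ⬝ᵥ y₁, y₁ ⬝ᵥ y₂; y₂ ⬝ᵥ y₁, y₂ ⬝ᵥ y₂] +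
          Matrix.det !![y₁ ⬝ᵥ y₁, y₁ ⬝ᵥ y₃; y₃ ⬝ᵥ y₁, y₃ ⬝ᵥ y₃] +
          Matrix.det !![y₁ ⬝ᵥ y₁, y₁ ⬝ᵥ y₂, y₁ ⬝ᵥ y₃;
            y₂ ⬝ᵥ y₁, y₂ ⬝ᵥ y₂, y₂ ⬝ᵥ y₃;
            y₃ ⬝ᵥ y₁, y₃ ⬝ᵥ y₂, y₃ ⬝ᵥ y₃]) /
        (1 + y₂ ⬝ᵥ y₂ + y₃ ⬝ᵥ y₃ +
          Matrix.det !![y₂ ⬝ᵥ y₂, y₂ ⬝ᵥ y₃; y₃ ⬝ᵥ y₂, y₃ ⬝ᵥ y₃]) := by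
  have hsq : ∀ k, Real.sqrt (l k) * Real.sqrt (l k) = l k :=
    fun k => Real.mul_self_sqrt (hl k).le
  have hln : ∀ k, l k ≠ 0 := fun k => (hl k).ne'
  have hdot : ∀ f g : Fin n → ℝ,
      (fun k => f k / Real.sqrt (l k)) ⬝ᵥ (fun k => g k / Real.sqrt (l k))
        = ∑ k, f k * g k / l k := by
    intro f g
    refine Finset.sum_congr rfl fun k _ => ?_
    rw [div_mul_div_comm, hsq]
  set s11 := ∑ k, a₁ k * a₁ k / l k with hs11
  set s12 := ∑ k, a₁ k * a₂ k / l k with hs12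
  set s13 := ∑ k, a₁ k * a₃ k / l k with hs13
  set s22 := ∑ k, a₂ k * a₂ k / l k with hs22
  set s23 := ∑ k, a₂ k * a₃ k / l k with hs23
  set s33 := ∑ k, a₃ k * a₃ k / l k with hs33
  -- nonnegativity and Cauchy–Schwarz
  have h22 : 0 ≤ s22 := Finset.sum_nonneg fun k _ =>
    div_nonneg (mul_self_nonneg _) (hl k).le
  have h33 : 0 ≤ s33 := Finset.sum_nonneg fun k _ =>
    div_nonneg (mul_self_nonneg _) (hl k).le
  have hcs : s23 ^ 2 ≤ s22 * s33 := by
    have h := Finset.sum_mul_sq_le_sq_mul_sq Finset.univ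
      (fun k => a₂ k / Real.sqrt (l k)) (fun k => a₃ k / Real.sqrt (l k))
    have e1 : ∑ k, (a₂ k / Real.sqrt (l k)) * (a₃ k / Real.sqrt (l k)) = s23 := hdot a₂ a₃
    have e2 : ∑ k, (a₂ k / Real.sqrt (l k)) ^ 2 = s22 := by
      rw [hs22]; refine Finset.sum_congr rfl fun k _ => ?_
      rw [sq, div_mul_div_comm, hsq]
    have e3 : ∑ k, (a₃ k / Real.sqrt (l k)) ^ 2 = s33 := by
      rw [hs33]; refine Finset.sum_congr rfl fun k _ => ?_
      rw [sq, div_mul_div_comm, hsq]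
    rw [e1, e2, e3] at h; exact h
  set Dd : ℝ := 1 + s22 + s33 + (s22 * s33 - s23 * s23) with hDd
  have hDpos : 0 < Dd := by nlinarith [sq_nonneg s23]
  have hDne : Dd ≠ 0 := hDpos.ne'
  set α : ℝ := ((1 + s33) * s12 - s23 * s13) / Dd with hα
  set β : ℝ := ((1 + s22) * s13 - s23 * s12) / Dd with hβ
  set w : Fin n → ℝ := fun k => (a₁ k - α * a₂ k - β * a₃ k) / l k with hw
  set A : Matrix (Fin n) (Fin n) ℝ :=
    Matrix.diagonal l + Matrix.of fun k r : Fin n => a₂ k * a₂ r + a₃ k * a₃ r with hA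
  have hsol2 : s12 - α * s22 - β * s23 = α := by
    rw [hα, hβ]; field_simp; ring
  have hsol3 : s13 - α * s23 - β * s33 = β := by
    rw [hα, hβ]; field_simp; ring
  have hsum2 : ∑ r, a₂ r * w r = α := by
    have h1 : ∑ r, a₂ r * w r
        = ∑ r, (a₁ r * a₂ r / l r - α * (a₂ r * a₂ r / l r) - β * (a₂ r * a₃ r / l r)) := by
      refine Finset.sum_congr rfl fun r _ => ?_
      rw [hw]; field_simp
    rw [h1, Finset.sum_sub_distrib, Finset.sum_sub_distrib, ← Finset.mul_sum, ← Finset.mul_sum,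
      ← hs12, ← hs22, ← hs23, hsol2]
  have hsum3 : ∑ r, a₃ r * w r = β := by
    have h1 : ∑ r, a₃ r * w r
        = ∑ r, (a₁ r * a₃ r / l r - α * (a₂ r * a₃ r / l r) - β * (a₃ r * a₃ r / l r)) := by
      refine Finset.sum_congr rfl fun r _ => ?_
      rw [hw]; field_simp
    rw [h1, Finset.sum_sub_distrib, Finset.sum_sub_distrib, ← Finset.mul_sum, ← Finset.mul_sum,
      ← hs13, ← hs23, ← hs33, hsol3]
  -- A *ᵥ w = a₁
  have hAw : A *ᵥ w = a₁ := by
    funext k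
    have hexp : (A *ᵥ w) k
        = l k * w k + a₂ k * (∑ r, a₂ r * w r) + a₃ k * (∑ r, a₃ r * w r) := by
      simp only [hA, Matrix.add_mulVec, Pi.add_apply, Matrix.mulVec_diagonal]
      simp only [Matrix.mulVec, dotProduct, Matrix.of_apply]
      rw [add_assoc]
      congr 1
      rw [Finset.mul_sum, Finset.mul_sum, ← Finset.sum_add_distrib]
      refine Finset.sum_congr rfl fun r _ => ?_
      ring
    have hlw : l k * w k = a₁ k - α * a₂ k - β * a₃ k := by
      show l k * ((a₁ k - α * a₂ k - β * a₃ k) / l k) = _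
      rw [← mul_div_assoc, mul_div_cancel_left₀ _ (hln k)]
    rw [hexp, hsum2, hsum3, hlw]; ring
  -- A is positive definite, hence invertible
  have hApd : A.PosDef := by
    rw [hA]
    refine Matrix.PosDef.add_posSemidef (Matrix.PosDef.diagonal hl) ?_
    have := Matrix.posSemidef_self_mul_conjTranspose
      (Matrix.of fun (k : Fin n) (i : Fin 2) => if i = 0 then a₂ k else a₃ k)
    convert this using 2
    ext k r
    simp [Matrix.mul_apply, Fin.sum_univ_two]
  have hAunit : IsUnit A.det := hApd.det_pos.ne'.isUnit
  have hinv : A⁻¹ *ᵥ a₁ = w := by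
    rw [← hAw, Matrix.mulVec_mulVec, Matrix.nonsing_inv_mul A hAunit, Matrix.one_mulVec]
  -- compute the quadratic form
  have hlhs : (A⁻¹ *ᵥ a₁) ⬝ᵥ a₁ = s11 - α * s12 - β * s13 := by
    rw [hinv]
    have h1 : w ⬝ᵥ a₁
        = ∑ k, (a₁ k * a₁ k / l k - α * (a₁ k * a₂ k / l k) - β * (a₁ k * a₃ k / l k)) := by
      refine Finset.sum_congr rfl fun k _ => ?_
      rw [hw]; field_simp
    rw [h1, Finset.sum_sub_distrib, Finset.sum_sub_distrib, ← Finset.mul_sum, ← Finset.mul_sum,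
      ← hs11, ← hs12, ← hs13]
  rw [hlhs]
  -- rewrite the right-hand side
  rw [hy₁, hy₂, hy₃]
  have c12 : ∑ k, a₂ k * a₁ k / l k = s12 := by
    rw [hs12]; exact Finset.sum_congr rfl fun k _ => by ring
  have c13 : ∑ k, a₃ k * a₁ k / l k = s13 := by
    rw [hs13]; exact Finset.sum_congr rfl fun k _ => by ring
  have c23 : ∑ k, a₃ k * a₂ k / l k = s23 := by
    rw [hs23]; exact Finset.sum_congr rfl fun k _ => by ring
  simp only [Matrix.det_fin_two_of, Matrix.det_fin_three, Matrix.of_apply, Matrix.cons_val',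
    Matrix.cons_val_zero, Matrix.cons_val_one, Matrix.head_cons, Matrix.empty_val',
    Matrix.cons_val_fin_one, Matrix.head_fin_const, Matrix.cons_val_two, Matrix.tail_cons]
  rw [hdot a₁ a₁, hdot a₁ a₂, hdot a₁ a₃, hdot a₂ a₁, hdot a₂ a₂,
    hdot a₂ a₃, hdot a₃ a₁, hdot a₃ a₂, hdot a₃ a₃, c12, c13, c23,
    ← hs11, ← hs12, ← hs13, ← hs22, ← hs23, ← hs33]
  rw [← hDd, hα, hβ, eq_div_iff hDne]
  field_simp
  ring
end
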